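/- Every microscopic set M ⊆ ℝ is contained in a microscopic Gδ subset of ℝ; i.e., there exists a Gδ set G ⊆ ℝ with M ⊆ G and G microscopic. -/
import Mathlib


open MeasureTheory Filter

/-- `S ⊆ ℝ` is an interval. -/
def IsIntervalSet (S : Set ℝ) : Prop := S.OrdConnected

/-- A set `M ⊆ ℝ` is microscopic if for each `ε > 0` there is a sequence of intervals
`(J n)` covering `M` with `|J n| ≤ ε ^ (n + 1)` for each `n`. -/
def Microscopic (M : Set ℝ) : Prop :=
  ∀ ε : ℝ, 0 < ε → ∃ J : ℕ → Set ℝ,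
    (∀ n, IsIntervalSet (J n)) ∧ M ⊆ (⋃ n, J n) ∧
      ∀ n, volume (J n) ≤ ENNReal.ofReal (ε ^ (n + 1))

lemma enlarge_interval (J : Set ℝ) (hJ : J.OrdConnected) (t : ℝ) (ht : 0 < t)
    (hv : volume J ≤ ENNReal.ofReal t) :
    ∃ U : Set ℝ, IsOpen U ∧ U.OrdConnected ∧ J ⊆ U ∧
      volume U ≤ ENNReal.ofReal (2 * t) := by
  rcases J.eq_empty_or_nonempty with h | ⟨x, hx⟩
  · refine ⟨Set.Ioo 0 t, isOpen_Ioo, Set.ordConnected_Ioo, by simp [h], ?_⟩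
    rw [Real.volume_Ioo]
    exact ENNReal.ofReal_le_ofReal (by linarith)
  · have hbdd : BddAbove J := by
      by_contra hb
      have hsub : Set.Ici x ⊆ J := by
        intro y hy
        obtain ⟨z, hz, hyz⟩ := not_bddAbove_iff.1 hb y
        exact hJ.out hx hz ⟨hy, hyz.le⟩
      have h2 := measure_mono (μ := volume) hsub
      rw [Real.volume_Ici] at h2
      rw [top_le_iff.1 h2] at hv
      exact (ENNReal.ofReal_lt_top).not_ge hv
    have hbdd' : BddBelow J := by
      by_contra hb
      have hsub : Set.Iic x ⊆ J := by
        intro y hy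
        obtain ⟨z, hz, hyz⟩ := not_bddBelow_iff.1 hb y
        exact hJ.out hz hx ⟨hyz.le, hy⟩
      have h2 := measure_mono (μ := volume) hsub
      rw [Real.volume_Iic] at h2
      rw [top_le_iff.1 h2] at hv
      exact (ENNReal.ofReal_lt_top).not_ge hv
    set a := sInf J with ha
    set b := sSup J with hb
    have hab : a ≤ b := le_trans (csInf_le hbdd' hx) (le_csSup hbdd hx)
    have hsub : Set.Ioo a b ⊆ J := by
      rintro y ⟨hy1, hy2⟩
      obtain ⟨u, hu, huy⟩ := exists_lt_of_csInf_lt ⟨x, hx⟩ hy1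
      obtain ⟨v, hv', hyv⟩ := exists_lt_of_lt_csSup ⟨x, hx⟩ hy2
      exact hJ.out hu hv' ⟨huy.le, hyv.le⟩
    have hba : b - a ≤ t := by
      have h1 := (measure_mono hsub).trans hv
      rw [Real.volume_Ioo] at h1
      have h2 := (ENNReal.ofReal_le_ofReal_iff ht.le).1 h1
      linarith
    refine ⟨Set.Ioo (a - t/2) (b + t/2), isOpen_Ioo, Set.ordConnected_Ioo, ?_, ?_⟩
    · intro y hy
      have h1 : a ≤ y := csInf_le hbdd' hy
      have h2 : y ≤ b := le_csSup hbdd hy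
      exact ⟨by linarith, by linarith⟩
    · rw [Real.volume_Ioo]
      exact ENNReal.ofReal_le_ofReal (by linarith)

theorem microscopic_subset_gdelta_microscopic (M : Set ℝ) (hM : Microscopic M) :
    ∃ G : Set ℝ, IsGδ G ∧ M ⊆ G ∧ Microscopic G := by
  have key : ∀ k : ℕ, ∃ U : ℕ → Set ℝ, (∀ n, IsOpen (U n)) ∧ (∀ n, (U n).OrdConnected) ∧
      M ⊆ (⋃ n, U n) ∧ ∀ n, volume (U n) ≤ ENNReal.ofReal ((((k:ℝ)+1)⁻¹) ^ (n+1)) := by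
    intro k
    set δ : ℝ := ((k:ℝ)+1)⁻¹ with hδ
    have hδpos : 0 < δ := by positivity
    obtain ⟨J, hJint, hJcov, hJvol⟩ := hM (δ/2) (by positivity)
    have hall : ∀ n, ∃ U : Set ℝ, IsOpen U ∧ U.OrdConnected ∧ J n ⊆ U ∧
        volume U ≤ ENNReal.ofReal (2 * (δ/2)^(n+1)) :=
      fun n => enlarge_interval (J n) (hJint n) _ (by positivity) (hJvol n)
    choose U hUo hUc hUsub hUvol using hall
    refine ⟨U, hUo, hUc, hJcov.trans (Set.iUnion_mono hUsub), fun n => ?_⟩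
    refine (hUvol n).trans (ENNReal.ofReal_le_ofReal ?_)
    have h2 : (2:ℝ) * (δ/2)^(n+1) = 2 * δ^(n+1) / 2^(n+1) := by
      rw [div_pow]; ring
    rw [h2, div_le_iff₀ (by positivity)]
    have h3 : (2:ℝ) ≤ 2^(n+1) := by
      calc (2:ℝ) = 2^1 := (pow_one 2).symm
      _ ≤ 2^(n+1) := pow_le_pow_right₀ one_le_two (by omega)
    nlinarith [pow_pos hδpos (n+1)]
  choose U hUo hUc hUcov hUvol using key
  refine ⟨⋂ k, ⋃ n, U k n, ?_, Set.subset_iInter hUcov, ?_⟩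
  · exact IsGδ.iInter fun k => (isOpen_iUnion (hUo k)).isGδ
  · intro ε hε
    obtain ⟨k, hk⟩ := exists_nat_gt (1/ε)
    have hk1 : 1/ε < (k:ℝ)+1 := hk.trans_le (by linarith)
    have hk2 : 1 < ε * ((k:ℝ)+1) := by
      rw [div_lt_iff₀ hε] at hk1; linarith
    have hk' : ((k:ℝ)+1)⁻¹ ≤ ε := by
      rw [inv_le_iff_one_le_mul₀ (by positivity)]
      linarith
    refine ⟨U k, hUc k, Set.iInter_subset _ k, fun n => ?_⟩
    refine (hUvol k n).trans (ENNReal.ofReal_le_ofReal ?_)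
    exact pow_le_pow_left₀ (by positivity) hk' _
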